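/- Let k ≥ 2. If a position S = (x_1, ..., x_n) satisfies x_3 ≤ 1, β(S) is odd, and R(x_1 − x_2) = 0, then S is a P-position in misère k-Bounded Greedy Nim. -/

import Mathlib

/-- One move in `k`-bounded greedy Nim on a descending-sorted list of heaps:
remove `t` stones with `1 ≤ t ≤ min x₁ k` from a heap with the largest
number of stones `x₁` (the head), and re-sort the result in descending order. -/
def BFollower (k : ℕ) (S S' : List ℕ) : Prop :=
  ∃ t : ℕ, 1 ≤ t ∧ t ≤ min S.headI k ∧
    S' = List.orderedInsert (· ≥ ·) (S.headI - t) S.tail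

/-- One move in greedy Nim: remove any `t` stones with `1 ≤ t ≤ x₁` from a heap
with the largest number of stones `x₁`, and re-sort in descending order. -/
def GFollower (S S' : List ℕ) : Prop :=
  ∃ t : ℕ, 1 ≤ t ∧ t ≤ S.headI ∧
    S' = List.orderedInsert (· ≥ ·) (S.headI - t) S.tail

theorem BFollower.sum_lt {k : ℕ} {S S' : List ℕ} (h : BFollower k S S') :
    S'.sum < S.sum := by
  obtain ⟨t, ht1, ht2, rfl⟩ := h
  have htx : t ≤ S.headI := le_trans ht2 (min_le_left _ _)
  match S with
  | [] => simp [List.headI] at htx; omega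
  | a :: l =>
      have hperm := List.perm_orderedInsert (· ≥ ·) (a - t) l
      have hsum : (List.orderedInsert (· ≥ ·) (a - t) l).sum = (a - t) + l.sum :=
        hperm.sum_eq
      simp only [List.headI, List.tail] at *
      simp [hsum]
      omega

theorem GFollower.sum_lt {S S' : List ℕ} (h : GFollower S S') :
    S'.sum < S.sum := by
  obtain ⟨t, ht1, ht2, rfl⟩ := h
  match S with
  | [] => simp [List.headI] at ht2; omega
  | a :: l =>
      have hperm := List.perm_orderedInsert (· ≥ ·) (a - t) l
      have hsum : (List.orderedInsert (· ≥ ·) (a - t) l).sum = (a - t) + l.sum :=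
        hperm.sum_eq
      simp only [List.headI, List.tail] at *
      simp [hsum]
      omega

/-- `S` is a P-position of `k`-bounded greedy Nim under the normal play
convention: the all-zero position is a P-position (it has no followers), and a
position is a P-position iff every follower is an N-position. -/
def NormalBP (k : ℕ) (S : List ℕ) : Prop :=
  ∀ S', BFollower k S S' → ¬ NormalBP k S'
termination_by S.sum
decreasing_by exact BFollower.sum_lt (by assumption)

/-- `S` is a P-position of `k`-bounded greedy Nim under the misère play
convention: the all-zero position is an N-position, and any other position is a
P-position iff every follower is an N-position. -/
def MisereBP (k : ℕ) (S : List ℕ) : Prop :=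
  S.sum ≠ 0 ∧ ∀ S', BFollower k S S' → ¬ MisereBP k S'
termination_by S.sum
decreasing_by exact BFollower.sum_lt (by assumption)

/-- Normal-play P-positions of greedy Nim. -/
def NormalGP (S : List ℕ) : Prop :=
  ∀ S', GFollower S S' → ¬ NormalGP S'
termination_by S.sum
decreasing_by exact GFollower.sum_lt (by assumption)

/-- Misère-play P-positions of greedy Nim. -/
def MisereGP (S : List ℕ) : Prop :=
  S.sum ≠ 0 ∧ ∀ S', GFollower S S' → ¬ MisereGP S'
termination_by S.sum
decreasing_by exact GFollower.sum_lt (by assumption)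

/-- `R a` is the remainder of `a` modulo `k + 1`. -/
def R (k a : ℕ) : ℕ := a % (k + 1)

/-- The `j`-th heap (1-based) of the position `S`. -/
def heap (S : List ℕ) (j : ℕ) : ℕ := S.getD (j - 1) 0

/-- `β(S)`: `0` if `x₃ = 0`, and `max { j : x_j = x₃ } - 2` otherwise. -/
noncomputable def beta (S : List ℕ) : ℕ :=
  if heap S 3 = 0 then 0
  else sSup {j : ℕ | 1 ≤ j ∧ j ≤ S.length ∧ heap S j = heap S 3} - 2

/-- `α(S)`: `0` if `x₁ = 0`, and `max { j : x_j = x₁ }` otherwise. -/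
noncomputable def alpha (S : List ℕ) : ℕ :=
  if heap S 1 = 0 then 0
  else sSup {j : ℕ | 1 ≤ j ∧ j ≤ S.length ∧ heap S j = heap S 1}

/-- The pair `(x₁, x₂)` (with `x₁ ≥ x₂`) is `k`-nice. -/
def KNice (k x₁ x₂ : ℕ) : Prop :=
  (R k x₁ = 0 ∧ R k x₂ = 1) ∨
  (R k (x₁ - x₂) = 0 ∧ 2 ≤ R k x₂) ∨
  (R k x₁ = 1 ∧ R k x₂ = 0)

/-- The triple `(x₁, x₂, x₃)` (with `x₁ ≥ x₂ ≥ x₃`) is `k`-good. -/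
def KGood (k x₁ x₂ x₃ : ℕ) : Prop :=
  (R k (x₁ - x₂) = k ∧ R k (x₂ - x₃) = 0) ∨
  (R k (x₁ - x₂) = 0 ∧ 1 ≤ R k (x₂ - x₃) ∧ R k (x₂ - x₃) ≤ k - 1) ∨
  (R k (x₁ - x₂) = 1 ∧ R k (x₂ - x₃) = k)


/-- The condition of the main theorem characterizing misère P-positions of
`k`-bounded greedy Nim. -/
noncomputable def MiserePCond (k : ℕ) (S : List ℕ) : Prop :=
  (heap S 3 ≤ 1 ∧ Even (beta S) ∧ KNice k (heap S 1) (heap S 2)) ∨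
  (heap S 3 ≤ 1 ∧ Odd (beta S) ∧ R k (heap S 1 - heap S 2) = 0) ∨
  (2 ≤ heap S 3 ∧ Even (beta S) ∧ R k (heap S 1 - heap S 2) = 0) ∨
  (2 ≤ heap S 3 ∧ Odd (beta S) ∧ KGood k (heap S 1) (heap S 2) (heap S 3))

/-!
Write `S = (a, b, 1^m, 0^z)`; the hypotheses say that `m = β(S)` is odd, `b ≥ 1` and
`k + 1 ∣ a - b`, and the second player can always restore this shape. If `a > b`, a move takes
`t` stones from the top heap only, and taking `k + 1 - t` more restores `k + 1 ∣ a - b`. If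
`a = b` and `t < a` stones are taken, taking `t` from the other top heap gives
`(a - t, a - t, 1^m, 0^z)`. If a top heap is emptied (`t = a ≤ k`), emptying the other one
leaves an odd number of single stones, a misère P-position since only the move `1 → 0` remains.
-/

section

open List

theorem misereBP_of_forall {k : ℕ} {S : List ℕ} (hS : S.sum ≠ 0)
    (h : ∀ S', BFollower k S S' → ¬ MisereBP k S') : MisereBP k S := by
  rw [MisereBP]; exact ⟨hS, h⟩

theorem not_misereBP_of_sum_eq_zero {k : ℕ} {S : List ℕ} (hS : S.sum = 0) :
    ¬ MisereBP k S := by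
  rw [MisereBP]; exact fun h => h.1 hS

theorem not_misereBP_of_bFollower {k : ℕ} {S S' : List ℕ} (h : BFollower k S S')
    (hS' : MisereBP k S') : ¬ MisereBP k S := by
  rw [MisereBP]; exact fun hS => hS.2 S' h hS'

theorem orderedInsert_eq_cons_of_forall_le {c : ℕ} {l : List ℕ} (h : ∀ x ∈ l, x ≤ c) :
    l.orderedInsert (· ≥ ·) c = c :: l := by
  cases l with
  | nil => rfl
  | cons x l => exact orderedInsert_cons_of_le _ l (h x mem_cons_self)

def onesZeros (m z : ℕ) : List ℕ := replicate m 1 ++ replicate z 0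

theorem onesZeros_succ (m z : ℕ) : onesZeros (m + 1) z = 1 :: onesZeros m z := rfl

theorem sum_onesZeros (m z : ℕ) : (onesZeros m z).sum = m := by
  simp [onesZeros]

theorem le_one_of_mem_onesZeros {m z x : ℕ} (hx : x ∈ onesZeros m z) : x ≤ 1 := by
  simp only [onesZeros, mem_append, mem_replicate] at hx
  omega

theorem getD_onesZeros (m z i : ℕ) : (onesZeros m z).getD i 0 = if i < m then 1 else 0 := by
  unfold onesZeros
  grind

theorem orderedInsert_zero_onesZeros (m z : ℕ) :
    (onesZeros m z).orderedInsert (· ≥ ·) 0 = onesZeros m (z + 1) := by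
  induction m with
  | zero =>
    rw [orderedInsert_eq_cons_of_forall_le fun x hx => by simp_all [onesZeros]]
    simp [onesZeros, replicate_succ]
  | succ m ih => simp [onesZeros_succ, ih]

theorem eq_onesZeros_of_pairwise {T : List ℕ} (hT : T.Pairwise (· ≥ ·))
    (h : ∀ x ∈ T, x ≤ 1) :
    ∃ m z, T = onesZeros m z := by
  induction T with
  | nil => exact ⟨0, 0, rfl⟩
  | cons c T ih =>
    rw [pairwise_cons] at hT
    obtain hc | hc : c = 0 ∨ c = 1 := by have := h c mem_cons_self; omega
    · refine ⟨0, T.length + 1, ?_⟩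
      simp only [onesZeros, replicate_zero, nil_append, replicate_succ, hc, cons.injEq, true_and]
      exact eq_replicate_of_mem fun x hx => by have := hT.1 x hx; omega
    · obtain ⟨m, z, rfl⟩ := ih hT.2 fun x hx => h x (mem_cons_of_mem c hx)
      exact ⟨m + 1, z, by rw [hc, onesZeros_succ]⟩

theorem le_getD_zero_of_pairwise {T : List ℕ} (hT : T.Pairwise (· ≥ ·)) {x : ℕ}
    (hx : x ∈ T) :
    x ≤ T.getD 0 0 := by
  cases T with
  | nil => simp at hx
  | cons c T =>
    rw [pairwise_cons] at hT
    exact (mem_cons.1 hx).elim le_of_eq (hT.1 x)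

theorem heap_cons_cons_add_three (a b : ℕ) (L : List ℕ) (i : ℕ) :
    heap (a :: b :: L) (i + 3) = L.getD i 0 := rfl

theorem beta_cons_cons_onesZeros (a b m z : ℕ) : beta (a :: b :: onesZeros m z) = m := by
  have h3 : heap (a :: b :: onesZeros m z) 3 = if 0 < m then 1 else 0 := getD_onesZeros m z 0
  rcases Nat.eq_zero_or_pos m with rfl | hm
  · simp [beta, h3]
  suffices IsGreatest {j | 1 ≤ j ∧ j ≤ (a :: b :: onesZeros m z).length ∧
      heap (a :: b :: onesZeros m z) j = 1} (m + 2) by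
    rw [beta, h3, if_pos hm, if_neg one_ne_zero, this.csSup_eq, Nat.add_sub_cancel]
  refine ⟨⟨by omega, by simp [onesZeros], ?_⟩, ?_⟩
  · rw [show m + 2 = (m - 1) + 3 by omega, heap_cons_cons_add_three, getD_onesZeros,
      if_pos (by omega)]
  · rintro j ⟨-, -, hj⟩
    by_contra! hlt
    rw [show j = (j - 3) + 3 by omega, heap_cons_cons_add_three, getD_onesZeros,
      if_neg (by omega)] at hj
    exact zero_ne_one hj

theorem bFollower_cons_iff {k a : ℕ} {L S' : List ℕ} :
    BFollower k (a :: L) S' ↔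
      ∃ t, 1 ≤ t ∧ t ≤ a ∧ t ≤ k ∧ S' = L.orderedInsert (· ≥ ·) (a - t) := by
  simp only [BFollower, headI, tail, le_min_iff, and_assoc]

theorem orderedInsert_onesZeros_of_one_le {c : ℕ} (hc : 1 ≤ c) (m z : ℕ) :
    (onesZeros m z).orderedInsert (· ≥ ·) c = c :: onesZeros m z :=
  orderedInsert_eq_cons_of_forall_le fun _ hx => (le_one_of_mem_onesZeros hx).trans hc

theorem misereBP_onesZeros_succ_iff {k : ℕ} (hk : 1 ≤ k) (m z : ℕ) :
    MisereBP k (onesZeros (m + 1) z) ↔ ¬ MisereBP k (onesZeros m (z + 1)) := by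
  have hmove : BFollower k (onesZeros (m + 1) z) (onesZeros m (z + 1)) :=
    bFollower_cons_iff.2 ⟨1, le_rfl, le_rfl, hk, (orderedInsert_zero_onesZeros m z).symm⟩
  refine ⟨fun hP hN => not_misereBP_of_bFollower hmove hN hP, fun hN => ?_⟩
  refine misereBP_of_forall (by simp [sum_onesZeros]) fun S' hS' => ?_
  rw [onesZeros_succ] at hS'
  obtain ⟨t, ht1, ht, -, rfl⟩ := bFollower_cons_iff.1 hS'
  obtain rfl : t = 1 := by omega
  rwa [Nat.sub_self, orderedInsert_zero_onesZeros]

theorem misereBP_onesZeros_iff {k : ℕ} (hk : 1 ≤ k) (m z : ℕ) :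
    MisereBP k (onesZeros m z) ↔ Odd m := by
  induction m generalizing z with
  | zero => simpa using not_misereBP_of_sum_eq_zero (sum_onesZeros 0 z)
  | succ m ih => rw [misereBP_onesZeros_succ_iff hk, ih, Nat.odd_add_one]

theorem misereBP_of_dvd_sub {k m : ℕ} (hm : Odd m) (z : ℕ) {a b : ℕ} (hba : b ≤ a)
    (hb : 1 ≤ b) (hdvd : k + 1 ∣ a - b) : MisereBP k (a :: b :: onesZeros m z) := by
  induction a using Nat.strong_induction_on generalizing b with
  | _ a ih =>
  refine misereBP_of_forall (by rw [sum_cons, sum_cons, sum_onesZeros]; omega) fun S' hS' => ?_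
  obtain ⟨t, ht1, hta, htk, rfl⟩ := bFollower_cons_iff.1 hS'
  rcases hba.lt_or_eq with hlt | hab
  · have hgap : k + 1 ≤ a - b := Nat.le_of_dvd (by omega) hdvd
    rw [orderedInsert_cons_of_le (· ≥ ·) _ (show a - t ≥ b by omega)]
    refine not_misereBP_of_bFollower
      (bFollower_cons_iff.2 ⟨k + 1 - t, by omega, by omega, by omega, rfl⟩) ?_
    rw [show a - t - (k + 1 - t) = a - (k + 1) by omega,
      orderedInsert_cons_of_le (· ≥ ·) _ (show a - (k + 1) ≥ b by omega)]
    refine ih _ (by omega) (by omega) hb ?_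
    rw [show a - (k + 1) - b = a - b - (k + 1) by omega]
    exact Nat.dvd_sub hdvd dvd_rfl
  subst b
  rcases hta.lt_or_eq with hlt | hat
  · rw [orderedInsert_of_not_le (· ≥ ·) _ (show ¬ a - t ≥ a by omega),
      orderedInsert_onesZeros_of_one_le (by omega)]
    refine not_misereBP_of_bFollower (bFollower_cons_iff.2 ⟨t, ht1, hta, htk, rfl⟩) ?_
    rw [orderedInsert_cons_of_le (· ≥ ·) _ (le_refl (a - t))]
    exact ih _ (by omega) le_rfl (by omega) (by simp)
  · subst t
    rw [Nat.sub_self, orderedInsert_of_not_le (· ≥ ·) _ (show ¬ 0 ≥ a by omega),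
      orderedInsert_zero_onesZeros]
    refine not_misereBP_of_bFollower (bFollower_cons_iff.2 ⟨a, ht1, le_rfl, htk, rfl⟩) ?_
    rw [Nat.sub_self, orderedInsert_zero_onesZeros]
    exact (misereBP_onesZeros_iff (by omega) m _).2 hm

end

theorem stmt17_general (k : ℕ) (S : List ℕ) (hsorted : S.Pairwise (· ≥ ·))
    (h3 : heap S 3 ≤ 1) (hb : Odd (beta S))
    (hr : R k (heap S 1 - heap S 2) = 0) :
    MisereBP k S := by
  rcases S with _ | ⟨a, _ | ⟨b, T⟩⟩
  · simp [beta, heap] at hb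
  · simp [beta, heap] at hb
  simp only [List.pairwise_cons, List.mem_cons, forall_eq_or_imp] at hsorted
  obtain ⟨⟨hab, -⟩, hbT, hT⟩ := hsorted
  obtain ⟨m, z, rfl⟩ :=
    eq_onesZeros_of_pairwise hT fun x hx => (le_getD_zero_of_pairwise hT hx).trans h3
  rw [beta_cons_cons_onesZeros] at hb
  exact misereBP_of_dvd_sub hb z hab (hbT 1 (by simp [onesZeros, hb.pos.ne']))
    (Nat.dvd_of_mod_eq_zero hr)

theorem stmt17 (k : ℕ) (hk : 2 ≤ k) (S : List ℕ) (hn : 4 ≤ S.length) (hsorted : S.Pairwise (· ≥ ·))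
    (h3 : heap S 3 ≤ 1) (hb : Odd (beta S))
    (hr : R k (heap S 1 - heap S 2) = 0) :
    MisereBP k S :=
  stmt17_general k S hsorted h3 hb hr
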